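/- (Theorem 1, global convergence) Let ω ∈ (0,2) and θ ≥ 0 be such that δ = 2θ/ω + ((2−ω)/ω)·minᵢ Dᵢᵢ > 0, and suppose f is bounded below on ℝⁿ. Let (xᵏ)ₖ≥0 be a sequence in ℝⁿ and (vᵏ⁺¹)ₖ≥0 vectors such that for every k, vᵏ⁺¹ is a subgradient of h at xᵏ⁺¹ and B xᵏ⁺¹ + b + C xᵏ + vᵏ⁺¹ = 0. Then ‖A xᵏ⁺¹ + b + vᵏ⁺¹‖ → 0 as k → ∞; that is, the stationarity residual of the matrix splitting iterates converges to zero. -/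

import Mathlib

open scoped RealInnerProductSpace
open Matrix Filter

noncomputable section

/-- Euclidean space ℝⁿ. -/
abbrev E (n : ℕ) := EuclideanSpace ℝ (Fin n)

/-- Matrix-vector multiplication, valued in Euclidean space. -/
def mulVecE {n : ℕ} (M : Matrix (Fin n) (Fin n) ℝ) (x : E n) : E n :=
  (WithLp.equiv 2 (Fin n → ℝ)).symm (M.mulVec ((WithLp.equiv 2 (Fin n → ℝ)) x))

/-- Operator (spectral) norm of a matrix. -/
def opNorm {n : ℕ} (M : Matrix (Fin n) (Fin n) ℝ) : ℝ :=
  ‖Matrix.toEuclideanCLM (𝕜 := ℝ) M‖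

/-- The diagonal part `D` of `A`. -/
def Dmat {n : ℕ} (A : Matrix (Fin n) (Fin n) ℝ) : Matrix (Fin n) (Fin n) ℝ :=
  Matrix.diagonal fun i => A i i

/-- The strictly lower triangular part `L` of `A`. -/
def Lmat {n : ℕ} (A : Matrix (Fin n) (Fin n) ℝ) : Matrix (Fin n) (Fin n) ℝ :=
  Matrix.of fun i j => if (j : ℕ) < (i : ℕ) then A i j else 0

/-- `B = L + (1/ω)(D + θI)`. -/
def Bmat {n : ℕ} (ω θ : ℝ) (A : Matrix (Fin n) (Fin n) ℝ) : Matrix (Fin n) (Fin n) ℝ :=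
  Lmat A + ω⁻¹ • (Dmat A + θ • (1 : Matrix (Fin n) (Fin n) ℝ))

/-- `C = Lᵀ + (1/ω)((ω−1)D − θI)`. -/
def Cmat {n : ℕ} (ω θ : ℝ) (A : Matrix (Fin n) (Fin n) ℝ) : Matrix (Fin n) (Fin n) ℝ :=
  (Lmat A)ᵀ + ω⁻¹ • ((ω - 1) • Dmat A - θ • (1 : Matrix (Fin n) (Fin n) ℝ))

/-- `v` is a subgradient of `h` at `z`. -/
def IsSubgradient {n : ℕ} (h : E n → ℝ) (v z : E n) : Prop :=
  ∀ y, h z + ⟪v, y - z⟫ ≤ h y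

/-- The composite objective `f(x) = (1/2)⟨x, Ax⟩ + ⟨b, x⟩ + h(x)`. -/
def fObj {n : ℕ} (A : Matrix (Fin n) (Fin n) ℝ) (b : E n) (h : E n → ℝ) (x : E n) : ℝ :=
  (1/2) * ⟪x, mulVecE A x⟫ + ⟪b, x⟫ + h x

/-- `z` is a triangle-proximal point of `x`: there is a subgradient `v` of `h` at `z`
with `Bz + b + Cx + v = 0`. -/
def IsTriangleProx {n : ℕ} (ω θ : ℝ) (A : Matrix (Fin n) (Fin n) ℝ) (b : E n)
    (h : E n → ℝ) (x z : E n) : Prop :=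
  ∃ v, IsSubgradient h v z ∧
    mulVecE (Bmat ω θ A) z + b + mulVecE (Cmat ω θ A) x + v = 0

/-! Each step decreases `f` by at least `(δ/2)‖xᵏ⁺¹ - xᵏ‖²`. Expanding `q` around `xᵏ⁺¹` and using
the subgradient inequality gives `f xᵏ ≥ f xᵏ⁺¹ + ⟨d, (A/2 - C) d⟩` with `d = xᵏ⁺¹ - xᵏ`, and
`A/2 - C = (B - C)/2` has quadratic form `((2 - ω)⟨d, D d⟩ + 2θ‖d‖²)/ω`, the skew part `L - Lᵀ`
contributing nothing. Since `f` is bounded below, the steps tend to zero, and the residual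
`A xᵏ⁺¹ + b + vᵏ⁺¹` is exactly `C (xᵏ⁺¹ - xᵏ)`. -/

section MatrixSplitting

variable {n : ℕ}

lemma mulVecE_eq_toEuclideanCLM (M : Matrix (Fin n) (Fin n) ℝ) (x : E n) :
    mulVecE M x = Matrix.toEuclideanCLM (𝕜 := ℝ) M x :=
  rfl

lemma mulVecE_add_left (M N : Matrix (Fin n) (Fin n) ℝ) (x : E n) :
    mulVecE (M + N) x = mulVecE M x + mulVecE N x := by
  simp only [mulVecE_eq_toEuclideanCLM, map_add, _root_.add_apply]

lemma mulVecE_sub_left (M N : Matrix (Fin n) (Fin n) ℝ) (x : E n) :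
    mulVecE (M - N) x = mulVecE M x - mulVecE N x := by
  simp only [mulVecE_eq_toEuclideanCLM, map_sub, _root_.sub_apply]

lemma mulVecE_smul_left (c : ℝ) (M : Matrix (Fin n) (Fin n) ℝ) (x : E n) :
    mulVecE (c • M) x = c • mulVecE M x := by
  simp only [mulVecE_eq_toEuclideanCLM, map_smul, _root_.smul_apply]

lemma mulVecE_one (x : E n) : mulVecE 1 x = x := by
  simp only [mulVecE_eq_toEuclideanCLM, map_one, one_apply_eq_self]

lemma mulVecE_sub_right (M : Matrix (Fin n) (Fin n) ℝ) (x y : E n) :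
    mulVecE M (x - y) = mulVecE M x - mulVecE M y :=
  (Matrix.toEuclideanCLM (𝕜 := ℝ) M).map_sub x y

lemma norm_mulVecE_le (M : Matrix (Fin n) (Fin n) ℝ) (x : E n) :
    ‖mulVecE M x‖ ≤ opNorm M * ‖x‖ :=
  (Matrix.toEuclideanCLM (𝕜 := ℝ) M).le_opNorm x

lemma inner_mulVecE (M : Matrix (Fin n) (Fin n) ℝ) (x y : E n) :
    ⟪x, mulVecE M y⟫ = x.ofLp ⬝ᵥ M *ᵥ y.ofLp :=
  Matrix.inner_toEuclideanCLM M x y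

lemma inner_mulVecE_transpose (M : Matrix (Fin n) (Fin n) ℝ) (x y : E n) :
    ⟪x, mulVecE Mᵀ y⟫ = ⟪y, mulVecE M x⟫ := by
  rw [inner_mulVecE, inner_mulVecE, Matrix.mulVec_transpose, Matrix.dotProduct_mulVec,
    dotProduct_comm]

lemma Matrix.IsSymm.inner_mulVecE_comm {A : Matrix (Fin n) (Fin n) ℝ} (hA : A.IsSymm)
    (x y : E n) :
    ⟪x, mulVecE A y⟫ = ⟪y, mulVecE A x⟫ := by
  conv_lhs => rw [← hA.eq]
  exact inner_mulVecE_transpose A x y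

lemma inner_mulVecE_sub_transpose_self (M : Matrix (Fin n) (Fin n) ℝ) (x : E n) :
    ⟪x, mulVecE (M - Mᵀ) x⟫ = 0 := by
  rw [mulVecE_sub_left, inner_sub_right, inner_mulVecE_transpose, sub_self]

lemma iInf_diag_mul_norm_sq_le (A : Matrix (Fin n) (Fin n) ℝ) (x : E n) :
    (⨅ i, A i i) * ‖x‖ ^ 2 ≤ ⟪x, mulVecE (Dmat A) x⟫ := by
  rw [inner_mulVecE, EuclideanSpace.norm_sq_eq, Finset.mul_sum]
  simp only [Dmat, dotProduct, Matrix.mulVec_diagonal]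
  refine Finset.sum_le_sum fun i _ => ?_
  have hi : ⨅ j, A j j ≤ A i i := ciInf_le (Set.finite_range _).bddBelow i
  simp only [Real.norm_eq_abs, sq_abs]
  nlinarith [sq_nonneg (x i)]

lemma Lmat_add_Dmat_add_transpose {A : Matrix (Fin n) (Fin n) ℝ} (hA : A.IsSymm) :
    Lmat A + Dmat A + (Lmat A)ᵀ = A := by
  ext i j
  simp only [Lmat, Dmat, Matrix.add_apply, Matrix.transpose_apply, Matrix.of_apply,
    Matrix.diagonal_apply]
  rcases lt_trichotomy (j : ℕ) i with hji | hji | hij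
  · simp [hji, hji.not_gt, Fin.ne_of_gt hji]
  · obtain rfl := Fin.ext hji
    simp
  · simp [hij, hij.not_gt, (Fin.ne_of_gt hij).symm, hA.apply i j]

lemma Bmat_add_Cmat {A : Matrix (Fin n) (Fin n) ℝ} (hA : A.IsSymm) {ω : ℝ} (hω : ω ≠ 0)
    (θ : ℝ) : Bmat ω θ A + Cmat ω θ A = A := by
  conv_rhs => rw [← Lmat_add_Dmat_add_transpose hA]
  ext i j
  simp only [Bmat, Cmat, Matrix.add_apply, Matrix.smul_apply, Matrix.sub_apply,
    Matrix.transpose_apply, smul_eq_mul]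
  field_simp
  ring

lemma mulVecE_eq_Bmat_add_Cmat {A : Matrix (Fin n) (Fin n) ℝ} (hA : A.IsSymm) {ω : ℝ}
    (hω : ω ≠ 0) (θ : ℝ) (x : E n) :
    mulVecE A x = mulVecE (Bmat ω θ A) x + mulVecE (Cmat ω θ A) x := by
  rw [← mulVecE_add_left, Bmat_add_Cmat hA hω]

lemma Bmat_sub_Cmat (ω θ : ℝ) (A : Matrix (Fin n) (Fin n) ℝ) :
    Bmat ω θ A - Cmat ω θ A
      = (Lmat A - (Lmat A)ᵀ) + ω⁻¹ • ((2 - ω) • Dmat A + (2 * θ) • 1) := by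
  rw [Bmat, Cmat]
  module

lemma mul_norm_sq_le_inner_mulVecE_Bmat_sub_Cmat (A : Matrix (Fin n) (Fin n) ℝ) {ω : ℝ}
    (hω₀ : 0 < ω) (hω₂ : ω ≤ 2) (θ : ℝ) (x : E n) :
    (2 * θ / ω + (2 - ω) / ω * ⨅ i, A i i) * ‖x‖ ^ 2
      ≤ ⟪x, mulVecE (Bmat ω θ A - Cmat ω θ A) x⟫ := by
  have hD := mul_le_mul_of_nonneg_left (iInf_diag_mul_norm_sq_le A x)
    (div_nonneg (sub_nonneg.2 hω₂) hω₀.le)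
  have hform : ⟪x, mulVecE (Bmat ω θ A - Cmat ω θ A) x⟫
      = (2 - ω) / ω * ⟪x, mulVecE (Dmat A) x⟫ + 2 * θ / ω * ‖x‖ ^ 2 := by
    simp only [Bmat_sub_Cmat, mulVecE_add_left, mulVecE_smul_left, mulVecE_one, inner_add_right,
      inner_smul_right, inner_mulVecE_sub_transpose_self, real_inner_self_eq_norm_sq]
    ring
  rw [hform]
  linarith

lemma fObj_sub_inner_add_le_of_isSubgradient {A : Matrix (Fin n) (Fin n) ℝ} (hA : A.IsSymm)
    (b : E n) {h : E n → ℝ} {v z : E n} (hv : IsSubgradient h v z) (w : E n) :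
    fObj A b h z - ⟪mulVecE A z + b + v, z - w⟫ + 1 / 2 * ⟪z - w, mulVecE A (z - w)⟫
      ≤ fObj A b h w := by
  have hsub := hv w
  have hsymm := hA.inner_mulVecE_comm z w
  simp only [fObj, mulVecE_sub_right, inner_sub_left, inner_sub_right, inner_add_left] at hsub hsymm ⊢
  linarith [real_inner_comm (mulVecE A z) z, real_inner_comm (mulVecE A z) w]

lemma residual_eq_mulVecE_Cmat {A : Matrix (Fin n) (Fin n) ℝ} (hA : A.IsSymm) {ω : ℝ}
    (hω : ω ≠ 0) (θ : ℝ) {b v w z : E n}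
    (heq : mulVecE (Bmat ω θ A) z + b + mulVecE (Cmat ω θ A) w + v = 0) :
    mulVecE A z + b + v = mulVecE (Cmat ω θ A) (z - w) := by
  rw [mulVecE_eq_Bmat_add_Cmat hA hω θ, mulVecE_sub_right, ← sub_eq_zero, ← heq]
  abel

lemma IsTriangleProx.fObj_add_le {A : Matrix (Fin n) (Fin n) ℝ} (hA : A.IsSymm) {b : E n}
    {h : E n → ℝ} {ω θ : ℝ} (hω : ω ∈ Set.Ioo (0 : ℝ) 2) {w z : E n}
    (hz : IsTriangleProx ω θ A b h w z) :
    fObj A b h z + (2 * θ / ω + (2 - ω) / ω * ⨅ i, A i i) / 2 * ‖z - w‖ ^ 2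
      ≤ fObj A b h w := by
  obtain ⟨v, hv, heq⟩ := hz
  have hexp := fObj_sub_inner_add_le_of_isSubgradient hA b hv w
  rw [residual_eq_mulVecE_Cmat hA hω.1.ne' θ heq] at hexp
  have hquad := mul_norm_sq_le_inner_mulVecE_Bmat_sub_Cmat A hω.1 hω.2.le θ (z - w)
  have hsplit : ⟪z - w, mulVecE A (z - w)⟫
      = ⟪z - w, mulVecE (Bmat ω θ A - Cmat ω θ A) (z - w)⟫
        + 2 * ⟪mulVecE (Cmat ω θ A) (z - w), z - w⟫ := by
    rw [mulVecE_eq_Bmat_add_Cmat hA hω.1.ne' θ, mulVecE_sub_left, inner_add_right,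
      inner_sub_right, real_inner_comm (z - w) (mulVecE (Cmat ω θ A) (z - w))]
    ring
  linarith

end MatrixSplitting

lemma tendsto_zero_of_add_mul_le {a u : ℕ → ℝ} {c : ℝ} (hc : 0 < c)
    (ha : BddBelow (Set.range a)) (hu : ∀ k, 0 ≤ u k) (hdec : ∀ k, a (k + 1) + c * u k ≤ a k) :
    Tendsto u atTop (nhds 0) := by
  have hanti : Antitone a := antitone_nat_of_succ_le fun k => by
    nlinarith [hdec k, hu k]
  have hlim := tendsto_atTop_ciInf hanti ha
  have hgap : Tendsto (fun k => (a k - a (k + 1)) / c) atTop (nhds 0) := by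
    simpa using (hlim.sub (hlim.comp (tendsto_add_atTop_nat 1))).div_const c
  refine squeeze_zero hu (fun k => ?_) hgap
  rw [le_div_iff₀ hc]
  linarith [hdec k]

theorem msm_residual_tendsto_zero_general {n : ℕ}
    (A : Matrix (Fin n) (Fin n) ℝ) (hA : A.IsSymm) (b : E n) (h : E n → ℝ)
    (ω θ : ℝ) (hω : ω ∈ Set.Ioo (0 : ℝ) 2)
    (δ : ℝ) (hδ : δ = 2 * θ / ω + (2 - ω) / ω * ⨅ i, A i i) (hδpos : 0 < δ)
    (hbdd : ∃ M : ℝ, ∀ y : E n, M ≤ fObj A b h y)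
    (x v : ℕ → E n)
    (hv : ∀ k : ℕ, IsSubgradient h (v (k + 1)) (x (k + 1)))
    (heq : ∀ k : ℕ, mulVecE (Bmat ω θ A) (x (k + 1)) + b
        + mulVecE (Cmat ω θ A) (x k) + v (k + 1) = 0) :
    Tendsto (fun k : ℕ => ‖mulVecE A (x (k + 1)) + b + v (k + 1)‖) atTop (nhds 0) := by
  subst hδ
  obtain ⟨M, hM⟩ := hbdd
  have hdecrease (k : ℕ) := IsTriangleProx.fObj_add_le hA hω ⟨v (k + 1), hv k, heq k⟩
  have hbddBelow : BddBelow (Set.range fun k => fObj A b h (x k)) :=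
    ⟨M, by rintro _ ⟨k, rfl⟩; exact hM _⟩
  have hstep_sq : Tendsto (fun k => ‖x (k + 1) - x k‖ ^ 2) atTop (nhds 0) :=
    tendsto_zero_of_add_mul_le (half_pos hδpos) hbddBelow (fun _ => sq_nonneg _) hdecrease
  have hstep : Tendsto (fun k => ‖x (k + 1) - x k‖) atTop (nhds 0) := by
    simpa [Real.sqrt_sq (norm_nonneg _)] using hstep_sq.sqrt
  refine squeeze_zero (fun _ => norm_nonneg _) (fun k => ?_)
    (by simpa using hstep.const_mul (opNorm (Cmat ω θ A)))
  rw [residual_eq_mulVecE_Cmat hA hω.1.ne' θ (heq k)]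
  exact norm_mulVecE_le _ _

/-- Theorem 1, global convergence. -/
theorem msm_residual_tendsto_zero {n : ℕ} (hn : 0 < n)
    (A : Matrix (Fin n) (Fin n) ℝ) (hA : A.IsSymm) (b : E n) (h : E n → ℝ)
    (ω θ : ℝ) (hω : ω ∈ Set.Ioo (0 : ℝ) 2) (hθ : 0 ≤ θ)
    (δ : ℝ) (hδ : δ = 2 * θ / ω + (2 - ω) / ω * ⨅ i, A i i) (hδpos : 0 < δ)
    (hbdd : ∃ M : ℝ, ∀ y : E n, M ≤ fObj A b h y)
    (x v : ℕ → E n)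
    (hv : ∀ k : ℕ, IsSubgradient h (v (k + 1)) (x (k + 1)))
    (heq : ∀ k : ℕ, mulVecE (Bmat ω θ A) (x (k + 1)) + b
        + mulVecE (Cmat ω θ A) (x k) + v (k + 1) = 0) :
    Tendsto (fun k : ℕ => ‖mulVecE A (x (k + 1)) + b + v (k + 1)‖) atTop (nhds 0) :=
  msm_residual_tendsto_zero_general A hA b h ω θ hω δ hδ hδpos hbdd x v hv heq
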